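/- arXiv:1902.00161 — 2 statements merged into one kernel-verified Lean document; each statement's English description precedes it below -/
import Mathlib

section
/- If the censoring mechanism factors out of the density (i.e., p_θ(t,d,a) = L(θ; t,d,a)·c(t,d) with c not depending on θ or on permutations applied to a, and L(θ; t,d,a_σ) well-defined for all σ), then the ratio q(x)/m(x) of the predictive density to the marginal likelihood is invariant under permutations of the treatment assignments wherever m(x) > 0, and hence the permutation tests based on T(x) = q(x) and T(x) = m(x) coincide on {x : q(x) > 0}. -/
open MeasureTheory Finset

noncomputable section

/-- Sample space of late-stage trial data `x = (t, d, a)`. -/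
abbrev SampleSpace (n : ℕ) := ((Fin n → ℝ) × (Fin n → Bool)) × (Fin n → Bool)

/-- Permute the treatment-arm labels `a` of a data point `x = ((t,d),a)`. -/
def permute {n : ℕ} (σ : Equiv.Perm (Fin n)) (x : SampleSpace n) : SampleSpace n :=
  (x.1, x.2 ∘ σ)

/-- Sorted values `T⁽¹⁾(x) ≤ ⋯ ≤ T^(n!)(x)` of the statistic over all permutations. -/
def sortedVals {n : ℕ} (T : SampleSpace n → ℝ) (x : SampleSpace n) : List ℝ :=
  ((Finset.univ : Finset (Equiv.Perm (Fin n))).val.map (fun σ => T (permute σ x))).sort (· ≤ ·)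

/-- Critical value `T^(k_α)(x)` with `k_α = n! − ⌊α n!⌋`. -/
def Tcrit {n : ℕ} (α : ℝ) (T : SampleSpace n → ℝ) (x : SampleSpace n) : ℝ :=
  (sortedVals T x).getD (Nat.factorial n - Nat.floor (α * (Nat.factorial n : ℝ)) - 1) 0

/-- `M⁺(x)`: number of permuted values strictly above the critical value. -/
def Mplus {n : ℕ} (α : ℝ) (T : SampleSpace n → ℝ) (x : SampleSpace n) : ℕ :=
  (Finset.univ.filter (fun σ : Equiv.Perm (Fin n) => T (permute σ x) > Tcrit α T x)).card

/-- `M⁰(x)`: number of permuted values equal to the critical value. -/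
def Mzero {n : ℕ} (α : ℝ) (T : SampleSpace n → ℝ) (x : SampleSpace n) : ℕ :=
  (Finset.univ.filter (fun σ : Equiv.Perm (Fin n) => T (permute σ x) = Tcrit α T x)).card

/-- The randomized α-level permutation test based on the statistic `T`. -/
def permTest {n : ℕ} (α : ℝ) (T : SampleSpace n → ℝ) (x : SampleSpace n) : ℝ :=
  if T x > Tcrit α T x then 1
  else if T x < Tcrit α T x then 0
  else (α * (Nat.factorial n : ℝ) - (Mplus α T x : ℝ)) / (Mzero α T x : ℝ)

/-
The censoring factor `c(t,d)` does not depend on `θ`, so it leaves the integral over `Θ₁`, and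
`q x = (c(t,d) / P(H₁|x_e)) · m x`. Permutations of the arm labels leave `(t,d)` fixed, so along
the permutation orbit of `x` the statistic `q` is a fixed positive multiple of `m`. The
randomized permutation test only sees the order of the statistic along the orbit, hence it is
unchanged by any strictly increasing transformation applied there.
-/

section StrictMonoInvariance

variable {n : ℕ} {T T' : SampleSpace n → ℝ} {f : ℝ → ℝ} {x : SampleSpace n}

theorem length_sortedVals (T : SampleSpace n → ℝ) (x : SampleSpace n) :
    (sortedVals T x).length = n.factorial := by
  simp [sortedVals, Multiset.length_sort, Fintype.card_perm]

theorem sortedVals_eq_map_of_strictMono (hf : StrictMono f)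
    (h : ∀ σ, T' (permute σ x) = f (T (permute σ x))) :
    sortedVals T' x = (sortedVals T x).map f := by
  have h_orbit : (univ.val.map fun σ => T' (permute σ x)) =
      (univ.val.map fun σ => T (permute σ x)).map f := by
    rw [Multiset.map_map]
    exact Multiset.map_congr rfl fun σ _ => h σ
  rw [sortedVals, sortedVals, h_orbit]
  exact (Multiset.map_sort f _ (· ≤ ·) (· ≤ ·) fun a _ b _ => hf.le_iff_le.symm).symm

theorem Tcrit_eq_of_strictMono (α : ℝ) (hf : StrictMono f)
    (h : ∀ σ, T' (permute σ x) = f (T (permute σ x))) :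
    Tcrit α T' x = f (Tcrit α T x) := by
  -- the index `n! - ⌊α n!⌋ - 1` is always in range, so the default value of `getD` never enters
  have hi : n.factorial - ⌊α * n.factorial⌋₊ - 1 < (sortedVals T x).length := by
    rw [length_sortedVals]
    have := n.factorial_pos
    omega
  rw [Tcrit, Tcrit, sortedVals_eq_map_of_strictMono hf h, List.getD_eq_getElem _ _ hi,
    List.getD_eq_getElem _ _ (by simpa using hi), List.getElem_map]

theorem Mplus_eq_of_strictMono (α : ℝ) (hf : StrictMono f)
    (h : ∀ σ, T' (permute σ x) = f (T (permute σ x))) :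
    Mplus α T' x = Mplus α T x := by
  simp only [Mplus, h, Tcrit_eq_of_strictMono α hf h, gt_iff_lt, hf.lt_iff_lt]

theorem Mzero_eq_of_strictMono (α : ℝ) (hf : StrictMono f)
    (h : ∀ σ, T' (permute σ x) = f (T (permute σ x))) :
    Mzero α T' x = Mzero α T x := by
  simp only [Mzero, h, Tcrit_eq_of_strictMono α hf h, hf.injective.eq_iff]

theorem permTest_eq_of_strictMono (α : ℝ) (hf : StrictMono f)
    (h : ∀ σ, T' (permute σ x) = f (T (permute σ x))) :
    permTest α T' x = permTest α T x := by
  have hx : T' x = f (T x) := h 1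
  simp only [permTest, hx, Tcrit_eq_of_strictMono α hf h, Mplus_eq_of_strictMono α hf h,
    Mzero_eq_of_strictMono α hf h, gt_iff_lt, hf.lt_iff_lt]

end StrictMonoInvariance

theorem ratio_invariance_and_tests_coincide_general
    {n : ℕ} (α : ℝ)
    {Θ : Type*} [MeasurableSpace Θ] (π : Measure Θ) (Θ1 : Set Θ)
    (L : Θ → SampleSpace n → ℝ)
    (c : ((Fin n → ℝ) × (Fin n → Bool)) → ℝ) (hc : ∀ td, 0 < c td)
    (PH1 : ℝ) (hPH1 : 0 < PH1)
    (p : Θ → SampleSpace n → ℝ) (hp : ∀ θ x, p θ x = L θ x * c x.1)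
    (m q : SampleSpace n → ℝ)
    (hm : ∀ x, m x = ∫ θ in Θ1, L θ x ∂π)
    (hq : ∀ x, q x = (∫ θ in Θ1, p θ x ∂π) / PH1) :
    (∀ (σ : Equiv.Perm (Fin n)) (x : SampleSpace n), 0 < m x → 0 < m (permute σ x) →
        q x / m x = q (permute σ x) / m (permute σ x))
      ∧ (∀ x, 0 < q x → permTest α q x = permTest α m x) := by
  have q_eq : ∀ y, q y = c y.1 / PH1 * m y := fun y => by
    simp only [hq, hm, hp, integral_mul_const]
    ring
  refine ⟨fun σ x hmx hmσx => ?_, fun x _ => ?_⟩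
  · rw [q_eq, q_eq, mul_div_cancel_right₀ _ hmx.ne', mul_div_cancel_right₀ _ hmσx.ne']
    rfl
  · exact permTest_eq_of_strictMono α (strictMono_mul_left_of_pos (div_pos (hc x.1) hPH1))
      fun σ => q_eq (permute σ x)

/-- If the censoring mechanism factors out of the density, `p_θ(t,d,a) = L(θ;t,d,a)·c(t,d)`,
then the ratio `q(x)/m(x)` of the predictive density to the marginal likelihood is invariant
under permutations of the treatment assignments wherever `m > 0`, and the permutation tests
based on `T = q` and `T = m` coincide on `{x : q(x) > 0}`. -/
theorem ratio_invariance_and_tests_coincide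
    {n : ℕ} (α : ℝ)
    {Θ : Type*} [MeasurableSpace Θ] (π : Measure Θ) (Θ1 : Set Θ)
    (L : Θ → SampleSpace n → ℝ)
    (c : ((Fin n → ℝ) × (Fin n → Bool)) → ℝ) (hc : ∀ td, 0 < c td)
    (PH1 : ℝ) (hPH1 : 0 < PH1)
    (p : Θ → SampleSpace n → ℝ) (hp : ∀ θ x, p θ x = L θ x * c x.1)
    (m q : SampleSpace n → ℝ)
    (hm : ∀ x, m x = ∫ θ in Θ1, L θ x ∂π)
    (hq : ∀ x, q x = (∫ θ in Θ1, p θ x ∂π) / PH1)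
    (hInt : ∀ x, IntegrableOn (fun θ => L θ x) Θ1 π) :
    (∀ (σ : Equiv.Perm (Fin n)) (x : SampleSpace n), 0 < m x → 0 < m (permute σ x) →
        q x / m x = q (permute σ x) / m (permute σ x))
      ∧ (∀ x, 0 < q x → permTest α q x = permTest α m x) :=
  ratio_invariance_and_tests_coincide_general α π Θ1 L c hc PH1 hPH1 p hp m q hm hq
end
end

section
/- If q(x) > 0 and q(x)/m(x) is invariant under permutations of the treatment labels, then the orbit-conditional probability of the boundary event satisfies Σ_σ 1{m(t,d,a_σ)=m^(k_α)(x)} q(t,d,a_σ) / Σ_σ q(t,d,a_σ) ≤ #{j : m^(j)(x) = m^(k_α)(x)} / #{j : m^(j)(x) ≥ m^(k_α)(x)}. -/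
open MeasureTheory Finset

noncomputable section

/-! Invariance of `q / m` makes `q` a constant positive multiple `c • m` on the orbit, so `c`
cancels. With `t` the critical value, the numerator is then `#{m = t} * t`, while the denominator
`∑ m` is at least `#{t ≤ m} * t` because `m ≥ 0`. -/

namespace Finset

variable {ι : Type*} (s : Finset ι) (v : ι → ℝ) (t : ℝ)

theorem sum_filter_eq_div_sum_le_card_div_card (hv : ∀ i ∈ s, 0 ≤ v i) :
    (∑ i ∈ s with v i = t, v i) / ∑ i ∈ s, v i
      ≤ (#{i ∈ s | v i = t} : ℝ) / #{i ∈ s | t ≤ v i} := by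
  have hnum : ∑ i ∈ s with v i = t, v i = #{i ∈ s | v i = t} * t := by
    rw [sum_congr rfl fun i hi => (mem_filter.mp hi).2, sum_const, nsmul_eq_mul]
  have hden : #{i ∈ s | t ≤ v i} * t ≤ ∑ i ∈ s, v i :=
    calc (#{i ∈ s | t ≤ v i} : ℝ) * t = ∑ i ∈ s with t ≤ v i, t := by
          rw [sum_const, nsmul_eq_mul]
      _ ≤ ∑ i ∈ s with t ≤ v i, v i := sum_le_sum fun i hi => (mem_filter.mp hi).2
      _ ≤ ∑ i ∈ s, v i :=
          sum_le_sum_of_subset_of_nonneg (filter_subset _ _) fun i hi _ => hv i hi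
  rw [hnum]
  rcases le_or_gt t 0 with ht | ht
  · exact (div_nonpos_of_nonpos_of_nonneg (mul_nonpos_of_nonneg_of_nonpos (by positivity) ht)
      (sum_nonneg hv)).trans (by positivity)
  obtain hG | hG := (#{i ∈ s | t ≤ v i}).eq_zero_or_pos
  · have : #{i ∈ s | v i = t} = 0 :=
      card_eq_zero.mpr <| filter_eq_empty_iff.mpr fun i hi hvi =>
        filter_eq_empty_iff.mp (card_eq_zero.mp hG) hi hvi.ge
    simp [this]
  calc (#{i ∈ s | v i = t} : ℝ) * t / ∑ i ∈ s, v i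
      ≤ #{i ∈ s | v i = t} * t / (#{i ∈ s | t ≤ v i} * t) :=
        div_le_div_of_nonneg_left (by positivity) (by positivity) hden
    _ = #{i ∈ s | v i = t} / #{i ∈ s | t ≤ v i} := mul_div_mul_right _ _ ht.ne'

theorem sum_ite_eq_div_sum_le_card_div_card {w : ι → ℝ} {c : ℝ} (hv : ∀ i ∈ s, 0 ≤ v i)
    (hc : c ≠ 0) (hw : ∀ i ∈ s, w i = c * v i) :
    (∑ i ∈ s, if v i = t then w i else 0) / ∑ i ∈ s, w i
      ≤ (#{i ∈ s | v i = t} : ℝ) / #{i ∈ s | t ≤ v i} := by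
  rw [← sum_filter, sum_congr rfl fun i hi => hw i (filter_subset _ _ hi), sum_congr rfl hw,
    ← mul_sum, ← mul_sum, mul_div_mul_left _ _ hc]
  exact sum_filter_eq_div_sum_le_card_div_card s v t hv

end Finset

theorem eq_mul_of_div_eq_of_ne_zero {ι : Type*} {f g : ι → ℝ} {c : ℝ} (hc : c ≠ 0)
    (h : ∀ i, f i / g i = c) (i : ι) : f i = c * g i := by
  have hg : g i ≠ 0 := fun hg => hc <| by rw [← h i, hg, div_zero]
  rw [← h i, div_mul_cancel₀ _ hg]

theorem orbit_boundary_bound_general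
    {n : ℕ} (α : ℝ)
    (m q : SampleSpace n → ℝ) (x : SampleSpace n)
    (hqx : 0 < q x)
    (hm0 : ∀ σ : Equiv.Perm (Fin n), 0 ≤ m (permute σ x))
    (hqm : ∀ σ : Equiv.Perm (Fin n), 0 < q (permute σ x) → 0 < m (permute σ x))
    (hratio : ∀ σ : Equiv.Perm (Fin n),
      q (permute σ x) / m (permute σ x) = q x / m x) :
    (∑ σ : Equiv.Perm (Fin n), if m (permute σ x) = Tcrit α m x then q (permute σ x) else 0)
        / (∑ σ : Equiv.Perm (Fin n), q (permute σ x))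
      ≤ ((Finset.univ.filter fun σ : Equiv.Perm (Fin n) =>
            m (permute σ x) = Tcrit α m x).card : ℝ)
        / ((Finset.univ.filter fun σ : Equiv.Perm (Fin n) =>
            Tcrit α m x ≤ m (permute σ x)).card : ℝ) := by
  have hmx : 0 < m x := hqm 1 hqx -- `permute 1 x` is definitionally `x`
  have hc : 0 < q x / m x := div_pos hqx hmx
  exact Finset.sum_ite_eq_div_sum_le_card_div_card _ _ _ (fun σ _ => hm0 σ) hc.ne'
    fun σ _ => eq_mul_of_div_eq_of_ne_zero hc.ne' hratio σ

/-- If `q(x) > 0` and the ratio `q/m` is invariant under permutations of the treatment labels,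
then the orbit-conditional probability of the boundary event is bounded by the ratio of the
count of permuted values equal to the critical value `m^(k_α)(x)` to the count of permuted
values at least the critical value. -/
theorem orbit_boundary_bound
    {n : ℕ} (α : ℝ) (hα : α ∈ Set.Ioo (0:ℝ) 1)
    (m q : SampleSpace n → ℝ) (x : SampleSpace n)
    (hqx : 0 < q x)
    (hm0 : ∀ σ : Equiv.Perm (Fin n), 0 ≤ m (permute σ x))
    (hqm : ∀ σ : Equiv.Perm (Fin n), 0 < q (permute σ x) → 0 < m (permute σ x))
    (hratio : ∀ σ : Equiv.Perm (Fin n),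
      q (permute σ x) / m (permute σ x) = q x / m x) :
    (∑ σ : Equiv.Perm (Fin n), if m (permute σ x) = Tcrit α m x then q (permute σ x) else 0)
        / (∑ σ : Equiv.Perm (Fin n), q (permute σ x))
      ≤ ((Finset.univ.filter fun σ : Equiv.Perm (Fin n) =>
            m (permute σ x) = Tcrit α m x).card : ℝ)
        / ((Finset.univ.filter fun σ : Equiv.Perm (Fin n) =>
            Tcrit α m x ≤ m (permute σ x)).card : ℝ) :=
  orbit_boundary_bound_general α m q x hqx hm0 hqm hratio
end
end
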